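/- arXiv:1108.0233 — 2 statements merged into one kernel-verified Lean document; each statement's English description precedes it below -/
import Mathlib

section
/- For Q-tuples of real numbers, the sorting map ξ : Q_Q(ℝ) → {(s_1,...,s_Q) ∈ ℝ^Q : s_1 ≤ ⋯ ≤ s_Q}, sending an unordered tuple to its nondecreasing rearrangement, is an isometry: |ξ(p) − ξ(q)| = G(p,q) for all p, q ∈ Q_Q(ℝ). -/
open Finset

/-- The metric on unordered `Q`-tuples of reals. -/
noncomputable def G1 {Q : ℕ} (p q : Fin Q → ℝ) : ℝ :=
  Finset.univ.inf' Finset.univ_nonempty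
    (fun σ : Equiv.Perm (Fin Q) => Real.sqrt (∑ i, (p i - q (σ i)) ^ 2))

/-- The sorting map: the nondecreasing rearrangement of a `Q`-tuple of reals. -/
noncomputable def ξsort {Q : ℕ} (p : Fin Q → ℝ) : Fin Q → ℝ := p ∘ Tuple.sort p

/-- Expanding the squares, only the cross term `∑ f i * g (σ i)` depends on `σ`, and the
rearrangement inequality maximises it at `σ = 1`. -/
theorem Monovary.sum_sub_sq_le_sum_sub_comp_perm_sq {ι α : Type*} [Fintype ι] [CommRing α]
    [LinearOrder α] [IsStrictOrderedRing α] {f g : ι → α} (hfg : Monovary f g)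
    (σ : Equiv.Perm ι) :
    ∑ i, (f i - g i) ^ 2 ≤ ∑ i, (f i - g (σ i)) ^ 2 := by
  have expand : ∀ h : ι → α,
      ∑ i, (f i - h i) ^ 2 = ∑ i, f i ^ 2 - 2 * ∑ i, f i * h i + ∑ i, h i ^ 2 := by
    intro h
    simp only [sub_sq, sum_add_distrib, sum_sub_distrib, mul_sum, mul_assoc]
  have cross : ∑ i, f i * g (σ i) ≤ ∑ i, f i * g i := hfg.sum_mul_comp_perm_le_sum_mul
  have squares : ∑ i, g (σ i) ^ 2 = ∑ i, g i ^ 2 := Equiv.sum_comp σ fun i ↦ g i ^ 2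
  rw [expand g, expand fun i ↦ g (σ i)]
  linarith

theorem sum_sub_sq_sort_le_sum_sub_comp_perm_sq {Q : ℕ} (p q : Fin Q → ℝ)
    (σ : Equiv.Perm (Fin Q)) :
    ∑ i, (ξsort p i - ξsort q i) ^ 2 ≤ ∑ i, (p i - q (σ i)) ^ 2 := by
  set sp := Tuple.sort p
  set sq := Tuple.sort q
  have hpq : Monovary (ξsort p) (ξsort q) :=
    (Tuple.monotone_sort p).monovary (Tuple.monotone_sort q)
  calc ∑ i, (ξsort p i - ξsort q i) ^ 2
      ≤ ∑ i, (ξsort p i - ξsort q ((sq.symm * σ * sp) i)) ^ 2 :=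
        hpq.sum_sub_sq_le_sum_sub_comp_perm_sq _
    _ = ∑ i, (p (sp i) - q (σ (sp i))) ^ 2 := by simp [ξsort, sp, sq]
    _ = ∑ i, (p i - q (σ i)) ^ 2 := Equiv.sum_comp sp fun i ↦ (p i - q (σ i)) ^ 2

theorem sum_sub_sq_sort_eq_sum_sub_comp_perm_sq {Q : ℕ} (p q : Fin Q → ℝ) :
    ∑ i, (ξsort p i - ξsort q i) ^ 2
      = ∑ i, (p i - q ((Tuple.sort q * (Tuple.sort p).symm) i)) ^ 2 := by
  rw [← Equiv.sum_comp (Tuple.sort p)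
    fun i ↦ (p i - q ((Tuple.sort q * (Tuple.sort p).symm) i)) ^ 2]
  simp [ξsort]

/-- The sorting map `ξ : Q_Q(ℝ) → {s₁ ≤ ⋯ ≤ s_Q} ⊂ ℝ^Q` is an isometry:
`|ξ(p) − ξ(q)| = G(p,q)`, and `ξ(p)` is indeed nondecreasing. -/
theorem stmt_1 (Q : ℕ) (p q : Fin Q → ℝ) :
    Monotone (ξsort p) ∧
    Real.sqrt (∑ i, (ξsort p i - ξsort q i) ^ 2) = G1 p q := by
  refine ⟨Tuple.monotone_sort p, le_antisymm ?_ ?_⟩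
  · exact le_inf' _ _ fun σ _ ↦
      Real.sqrt_le_sqrt (sum_sub_sq_sort_le_sum_sub_comp_perm_sq p q σ)
  · rw [sum_sub_sq_sort_eq_sum_sub_comp_perm_sq]
    exact inf'_le _ (mem_univ _)
end

section
/- Suppose n ≥ 2 and Q ≥ 2. Given any finite set of nonzero direction vectors v_1,...,v_ℓ ∈ S^{n−1} with ℓ ≤ Q(Q−1), there exists an orthonormal basis {e_1,...,e_n} of ℝⁿ and an angle θ₀ = arcsin(1/√n)·(1/2)^{(n−1)(Q(Q−1)−1)} > 0 such that |⟨e_α, v_b⟩| ≥ sin θ₀ for all α ∈ {1,...,n} and b ∈ {1,...,ℓ}. -/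
/-!
Induction on the number of directions. A single direction `x` is handled by the reflection taking
the diagonal unit vector, all of whose coordinates are `1/√n`, to `x`. Given a basis for which the
first directions have all coordinates at least `sin θ` in absolute value, a new unit vector `x`
already has one coordinate of size `≥ 1/√n ≥ sin θ`. Each of the other `n - 1` coordinates is then
repaired in turn by a plane rotation of angle at most `θ/2` that turns the basis vector `e k`
towards `x` until `|⟪e k, x⟫| = sin (θ/2)`. This rotation moves every basis vector by an angle at
most `θ/2`, so by the triangle inequality for angles the coordinates that were `≥ sin θ` stay
`≥ sin (θ/2)`, for the new vector as well as the old ones.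
-/

open scoped RealInnerProductSpace
open Real InnerProductGeometry

variable {E : Type*} [NormedAddCommGroup E] [InnerProductSpace ℝ E]

theorem orthonormal_pair {f₁ f₂ : E} (h₁ : ‖f₁‖ = 1) (h₂ : ‖f₂‖ = 1) (h₁₂ : ⟪f₁, f₂⟫ = 0) :
    Orthonormal ℝ ![f₁, f₂] := by
  rw [orthonormal_iff_ite]
  simp [Fin.forall_fin_two, h₁₂, real_inner_comm f₁ f₂, h₁, h₂]

/-- The rotation by `t` in the plane of an orthonormal pair `f₁, f₂`, fixing its orthogonal
complement. -/
noncomputable def planeRotation (f₁ f₂ : E) (t : ℝ) : E →ₗ[ℝ] E where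
  toFun z := z + ((cos t - 1) * ⟪f₁, z⟫ - sin t * ⟪f₂, z⟫) • f₁
      + (sin t * ⟪f₁, z⟫ + (cos t - 1) * ⟪f₂, z⟫) • f₂
  map_add' z w := by
    simp only [inner_add_right]
    module
  map_smul' c z := by
    simp only [inner_smul_right, RingHom.id_apply]
    module

section planeRotation

variable {f₁ f₂ : E} (t : ℝ)

theorem planeRotation_apply (z : E) :
    planeRotation f₁ f₂ t z = z + ((cos t - 1) * ⟪f₁, z⟫ - sin t * ⟪f₂, z⟫) • f₁
      + (sin t * ⟪f₁, z⟫ + (cos t - 1) * ⟪f₂, z⟫) • f₂ := rfl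

theorem inner_planeRotation_planeRotation (h₁ : ‖f₁‖ = 1) (h₂ : ‖f₂‖ = 1) (h₁₂ : ⟪f₁, f₂⟫ = 0)
    (z w : E) : ⟪planeRotation f₁ f₂ t z, planeRotation f₁ f₂ t w⟫ = ⟪z, w⟫ := by
  have h₁₁ : ⟪f₁, f₁⟫ = 1 := by rw [real_inner_self_eq_norm_sq, h₁, one_pow]
  have h₂₂ : ⟪f₂, f₂⟫ = 1 := by rw [real_inner_self_eq_norm_sq, h₂, one_pow]
  simp only [planeRotation_apply, inner_add_left, inner_add_right, real_inner_smul_left,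
    real_inner_smul_right, h₁₁, h₂₂, h₁₂, real_inner_comm f₁ f₂, real_inner_comm _ z]
  linear_combination (⟪f₁, z⟫ * ⟪f₁, w⟫ + ⟪f₂, z⟫ * ⟪f₂, w⟫) * sin_sq_add_cos_sq t

theorem planeRotation_left (h₁ : ‖f₁‖ = 1) (h₁₂ : ⟪f₁, f₂⟫ = 0) :
    planeRotation f₁ f₂ t f₁ = cos t • f₁ + sin t • f₂ := by
  have h₁₁ : ⟪f₁, f₁⟫ = 1 := by rw [real_inner_self_eq_norm_sq, h₁, one_pow]
  rw [planeRotation_apply, h₁₁, real_inner_comm, h₁₂]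
  module

theorem cos_mul_sq_norm_le_inner_planeRotation (h₁ : ‖f₁‖ = 1) (h₂ : ‖f₂‖ = 1)
    (h₁₂ : ⟪f₁, f₂⟫ = 0) (z : E) : cos t * ‖z‖ ^ 2 ≤ ⟪z, planeRotation f₁ f₂ t z⟫ := by
  have hbessel : ⟪f₁, z⟫ ^ 2 + ⟪f₂, z⟫ ^ 2 ≤ ‖z‖ ^ 2 := by
    simpa [Fin.sum_univ_two] using
      (orthonormal_pair h₁ h₂ h₁₂).sum_inner_products_le z (s := Finset.univ)
  simp only [planeRotation_apply, inner_add_right, real_inner_smul_right,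
    real_inner_comm f₁ z, real_inner_comm f₂ z, real_inner_self_eq_norm_sq]
  nlinarith [cos_le_one t]

theorem exists_linearIsometryEquiv_rotation [FiniteDimensional ℝ E] (h₁ : ‖f₁‖ = 1)
    (h₂ : ‖f₂‖ = 1) (h₁₂ : ⟪f₁, f₂⟫ = 0) :
    ∃ R : E ≃ₗᵢ[ℝ] E, R f₁ = cos t • f₁ + sin t • f₂ ∧ ∀ z, cos t * ‖z‖ ^ 2 ≤ ⟪z, R z⟫ := by
  let R := ((planeRotation f₁ f₂ t).isometryOfInner
    (inner_planeRotation_planeRotation t h₁ h₂ h₁₂)).toLinearIsometryEquiv rfl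
  have hR : ⇑R = planeRotation f₁ f₂ t := by ext; simp [R, LinearMap.coe_isometryOfInner]
  exact ⟨R, by rw [hR, planeRotation_left t h₁ h₁₂], fun z => by
    rw [hR]; exact cos_mul_sq_norm_le_inner_planeRotation t h₁ h₂ h₁₂ z⟩

end planeRotation

theorem exists_eq_smul_add_smul_of_abs_inner_lt_one {f x : E} (hf : ‖f‖ = 1) (hx : ‖x‖ = 1)
    (hfx : |⟪f, x⟫| < 1) :
    ∃ u : E, ‖u‖ = 1 ∧ ⟪f, u⟫ = 0 ∧ x = ⟪f, x⟫ • f + √(1 - ⟪f, x⟫ ^ 2) • u := by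
  set a := ⟪f, x⟫
  set y := x - a • f
  have hfy : ⟪f, y⟫ = 0 := by simp [y, inner_sub_right, real_inner_smul_right, hf, a]
  have hy : ‖y‖ = √(1 - a ^ 2) := by
    have h := norm_add_sq_eq_norm_sq_add_norm_sq_real (x := a • f) (y := y)
      (by rw [real_inner_smul_left, hfy, mul_zero])
    rw [show a • f + y = x from add_sub_cancel _ _, hx] at h
    simp only [norm_smul, hf, mul_one, norm_eq_abs, abs_mul_abs_self] at h
    rw [← sqrt_sq (norm_nonneg y)]
    congr 1
    nlinarith
  have hy₀ : ‖y‖ ≠ 0 := by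
    rw [hy]
    have : a ^ 2 < 1 := by nlinarith [sq_abs a, abs_nonneg a]
    positivity
  refine ⟨‖y‖⁻¹ • y, ?_, ?_, ?_⟩
  · rw [norm_smul, norm_inv, norm_norm, inv_mul_cancel₀ hy₀]
  · rw [real_inner_smul_right, hfy, mul_zero]
  · rw [← hy, smul_smul, mul_inv_cancel₀ hy₀, one_smul, add_sub_cancel]

namespace InnerProductGeometry

theorem angle_le_of_cos_le_inner {x y : E} (hx : ‖x‖ = 1) (hy : ‖y‖ = 1) {t : ℝ}
    (ht₀ : 0 ≤ t) (ht : t ≤ π) (h : cos t ≤ ⟪x, y⟫) : angle x y ≤ t := by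
  rw [angle, hx, hy, mul_one, div_one]
  exact (arccos_le_arccos h).trans (arccos_cos ht₀ ht).le

theorem sin_sub_le_abs_inner {z z' w : E} (hz : ‖z‖ = 1) (hz' : ‖z'‖ = 1) (hw : ‖w‖ = 1)
    {θ t : ℝ} (ht₀ : 0 ≤ t) (htθ : t ≤ θ) (hθ : θ ≤ π / 2)
    (hzz' : cos t ≤ ⟪z, z'⟫) (hzw : sin θ ≤ |⟪z, w⟫|) : sin (θ - t) ≤ |⟪z', w⟫| := by
  wlog hzw₀ : 0 ≤ ⟪z, w⟫ generalizing w
  · simpa using this (w := -w) (by rwa [norm_neg]) (by rwa [inner_neg_right, abs_neg])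
      (by rw [inner_neg_right]; linarith)
  have hzw' : angle z w ≤ π / 2 - θ := by
    refine angle_le_of_cos_le_inner hz hw (by linarith) (by linarith [pi_pos]) ?_
    rwa [cos_pi_div_two_sub, ← abs_of_nonneg hzw₀]
  have hangle : angle z' w ≤ π / 2 - (θ - t) := calc
    angle z' w ≤ angle z' z + angle z w := angle_le_angle_add_angle _ _ _
    _ ≤ t + (π / 2 - θ) := by
      rw [angle_comm]
      gcongr
      exact angle_le_of_cos_le_inner hz hz' ht₀ (by linarith [pi_pos]) hzz'
    _ = π / 2 - (θ - t) := by ring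
  calc sin (θ - t) = cos (π / 2 - (θ - t)) := (cos_pi_div_two_sub _).symm
    _ ≤ cos (angle z' w) :=
      cos_le_cos_of_nonneg_of_le_pi (angle_nonneg _ _) (by linarith) hangle
    _ = ⟪z', w⟫ := (inner_eq_cos_angle_of_norm_eq_one hz' hw).symm
    _ ≤ |⟪z', w⟫| := le_abs_self _

end InnerProductGeometry

namespace OrthonormalBasis

variable {ι : Type*} [Fintype ι]

theorem exists_one_div_sqrt_card_le_abs_inner (e : OrthonormalBasis ι ℝ E) {x : E}
    (hx : ‖x‖ = 1) : ∃ j, 1 / √(Fintype.card ι) ≤ |⟪e j, x⟫| := by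
  have hsum : ∑ j, ⟪e j, x⟫ ^ 2 = 1 := by rw [e.sum_sq_inner_right, hx, one_pow]
  have hι : (Finset.univ : Finset ι).Nonempty :=
    Finset.nonempty_of_sum_ne_zero (hsum ▸ one_ne_zero)
  have := Finset.univ_nonempty_iff.mp hι
  have hcard : (Fintype.card ι : ℝ) ≠ 0 := Nat.cast_ne_zero.mpr Fintype.card_ne_zero
  obtain ⟨j, -, hj⟩ := Finset.exists_le_of_sum_le hι
    (f := fun _ => 1 / (Fintype.card ι : ℝ)) (g := fun j => ⟪e j, x⟫ ^ 2) (by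
      rw [hsum, Finset.sum_const, Finset.card_univ, nsmul_eq_mul, mul_one_div_cancel hcard])
  refine ⟨j, ?_⟩
  rw [← sqrt_sq_eq_abs, one_div, ← sqrt_inv, ← one_div]
  exact sqrt_le_sqrt hj

theorem exists_inner_eq_one_div_sqrt_card (b : OrthonormalBasis ι ℝ E) {x : E} (hx : ‖x‖ = 1) :
    ∃ e : OrthonormalBasis ι ℝ E, ∀ j, ⟪e j, x⟫ = 1 / √(Fintype.card ι) := by
  cases isEmpty_or_nonempty ι
  · exact ⟨b, isEmptyElim⟩
  set d := b.repr.symm (WithLp.toLp 2 fun _ => 1 / √(Fintype.card ι))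
  have hd : ‖d‖ = 1 := by
    rw [LinearIsometryEquiv.norm_map, EuclideanSpace.norm_eq]
    simp
  set ρ := (ℝ ∙ (d - x))ᗮ.reflection
  have hρ : ρ d = x := Submodule.reflection_sub (hd.trans hx.symm)
  refine ⟨b.map ρ, fun j => ?_⟩
  rw [b.map_apply, ← hρ, LinearIsometryEquiv.inner_map_map, ← b.repr_apply_apply]
  simp [d]

theorem exists_cos_le_inner_sin_le_abs_inner (e : OrthonormalBasis ι ℝ E) {x : E}
    (hx : ‖x‖ = 1) (k : ι) {φ : ℝ} (hφ₀ : 0 ≤ φ) (hφ : φ ≤ π / 2) :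
    ∃ e' : OrthonormalBasis ι ℝ E, (∀ j, cos φ ≤ ⟪e j, e' j⟫) ∧ sin φ ≤ |⟪e' k, x⟫| := by
  wlog ha₀ : 0 ≤ ⟪e k, x⟫ generalizing x
  · simpa using this (x := -x) (by rwa [norm_neg]) (by rw [inner_neg_right]; linarith)
  by_cases ha : sin φ ≤ ⟪e k, x⟫
  · exact ⟨e, fun j => by simpa using cos_le_one φ, ha.trans (le_abs_self _)⟩
  replace ha := not_le.mp ha
  have ha₁ : |⟪e k, x⟫| < 1 := by rw [abs_of_nonneg ha₀]; linarith [sin_le_one φ]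
  obtain ⟨u, hu, hku, hxu⟩ :=
    exists_eq_smul_add_smul_of_abs_inner_lt_one (e.norm_eq_one k) hx ha₁
  set a := ⟪e k, x⟫
  rw [← cos_arcsin] at hxu
  set ψ := arcsin a
  have hsinψ : sin ψ = a := sin_arcsin (abs_le.mp ha₁.le).1 (abs_le.mp ha₁.le).2
  have hψ₀ : 0 ≤ ψ := arcsin_nonneg.mpr ha₀
  have hψφ : ψ ≤ φ := by
    rw [← arcsin_sin (by linarith [pi_pos]) hφ]
    exact arcsin_le_arcsin ha.le
  -- `x = sin ψ • e k + cos ψ • u`: turning `e k` by `φ - ψ` towards `u` gives `⟪e' k, x⟫ = sin φ`.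
  have := e.toBasis.finiteDimensional_of_finite
  obtain ⟨R, hRk, hR⟩ := exists_linearIsometryEquiv_rotation (φ - ψ) (e.norm_eq_one k) hu hku
  refine ⟨e.map R, fun j => ?_, ?_⟩
  · calc cos φ ≤ cos (φ - ψ) :=
          cos_le_cos_of_nonneg_of_le_pi (by linarith) (by linarith) (by linarith)
      _ = cos (φ - ψ) * ‖e j‖ ^ 2 := by rw [e.norm_eq_one, one_pow, mul_one]
      _ ≤ ⟪e j, R (e j)⟫ := hR (e j)
      _ = ⟪e j, e.map R j⟫ := by rw [e.map_apply]
  · have : ⟪e.map R k, x⟫ = sin φ := by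
      have hsum := sin_add ψ (φ - ψ)
      rw [add_sub_cancel, hsinψ] at hsum
      rw [e.map_apply, hRk, hxu]
      simp only [inner_add_left, inner_add_right, real_inner_smul_left, real_inner_smul_right,
        real_inner_self_eq_norm_sq, e.norm_eq_one, hu, hku, real_inner_comm (e k) u]
      linear_combination -hsum
    rw [this]; exact le_abs_self _

theorem exists_sin_half_le_abs_inner (e : OrthonormalBasis ι ℝ E) {x : E} (hx : ‖x‖ = 1)
    (k : ι) {θ : ℝ} (hθ₀ : 0 ≤ θ) (hθ : θ ≤ π / 2) :
    ∃ e' : OrthonormalBasis ι ℝ E,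
      (∀ z : E, ‖z‖ = 1 → ∀ j, sin θ ≤ |⟪e j, z⟫| → sin (θ / 2) ≤ |⟪e' j, z⟫|) ∧
      sin (θ / 2) ≤ |⟪e' k, x⟫| := by
  obtain ⟨e', he', hk⟩ :=
    e.exists_cos_le_inner_sin_le_abs_inner hx k (φ := θ / 2) (by linarith) (by linarith [pi_pos])
  refine ⟨e', fun z hz j hj => ?_, hk⟩
  simpa [sub_half] using sin_sub_le_abs_inner (e.norm_eq_one j) (e'.norm_eq_one j) hz
    (by linarith) (by linarith) hθ (he' j) hj

theorem exists_sin_mul_le_abs_inner_of_finset (e : OrthonormalBasis ι ℝ E) {x : E}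
    (hx : ‖x‖ = 1) (S : Finset ι) {θ : ℝ} (hθ₀ : 0 ≤ θ) (hθ : θ ≤ π / 2) :
    ∃ e' : OrthonormalBasis ι ℝ E,
      (∀ z : E, ‖z‖ = 1 → ∀ j, sin θ ≤ |⟪e j, z⟫| → sin (θ * (1 / 2) ^ S.card) ≤ |⟪e' j, z⟫|) ∧
      ∀ j ∈ S, sin (θ * (1 / 2) ^ S.card) ≤ |⟪e' j, x⟫| := by
  induction S using Finset.cons_induction with
  | empty => exact ⟨e, by simp, by simp⟩
  | cons k S hk ih =>
    obtain ⟨e₁, he₁, he₁S⟩ := ih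
    have hθ' : θ * (1 / 2) ^ S.card ≤ θ :=
      mul_le_of_le_one_right hθ₀ (pow_le_one₀ (by norm_num) (by norm_num))
    obtain ⟨e₂, he₂, he₂k⟩ :=
      e₁.exists_sin_half_le_abs_inner hx k (by positivity) (hθ'.trans hθ)
    rw [Finset.card_cons, pow_succ, ← mul_assoc, mul_one_div]
    refine ⟨e₂, fun z hz j hj => he₂ z hz j (he₁ z hz j hj), fun j hj => ?_⟩
    rcases Finset.mem_cons.mp hj with rfl | hj
    · exact he₂k
    · exact he₂ x hx j (he₁S j hj)

end OrthonormalBasis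

/-- `θ₀` for `m` directions: the first direction gets `arcsin (1/√n)`, and each further one halves
the angle once for each of the `n - 1` coordinates it repairs. -/
noncomputable def basisAngle (n m : ℕ) : ℝ :=
  arcsin (1 / √n) * (1 / 2 : ℝ) ^ ((n - 1) * (m - 1))

theorem basisAngle_nonneg (n m : ℕ) : 0 ≤ basisAngle n m :=
  mul_nonneg (arcsin_nonneg.mpr (by positivity)) (by positivity)

theorem basisAngle_le_arcsin (n m : ℕ) : basisAngle n m ≤ arcsin (1 / √n) :=
  mul_le_of_le_one_right (arcsin_nonneg.mpr (by positivity))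
    (pow_le_one₀ (by norm_num) (by norm_num))

theorem basisAngle_le_pi_div_two (n m : ℕ) : basisAngle n m ≤ π / 2 :=
  (basisAngle_le_arcsin n m).trans (arcsin_le_pi_div_two _)

theorem basisAngle_succ (n : ℕ) {m : ℕ} (hm : m ≠ 0) :
    basisAngle n (m + 1) = basisAngle n m * (1 / 2) ^ (n - 1) := by
  obtain ⟨m, rfl⟩ := Nat.exists_eq_succ_of_ne_zero hm
  simp only [basisAngle, Nat.succ_sub_one, mul_assoc, ← pow_add, Nat.mul_succ]

theorem sin_basisAngle_anti (n : ℕ) {m m' : ℕ} (h : m ≤ m') :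
    sin (basisAngle n m') ≤ sin (basisAngle n m) := by
  refine sin_le_sin_of_le_of_le_pi_div_two (by linarith [basisAngle_nonneg n m', pi_pos])
    (basisAngle_le_pi_div_two n m)
    (mul_le_mul_of_nonneg_left ?_ (arcsin_nonneg.mpr (by positivity)))
  exact pow_le_pow_of_le_one (by norm_num) (by norm_num)
    (Nat.mul_le_mul_left _ (Nat.sub_le_sub_right h 1))

theorem sin_basisAngle_le (n m : ℕ) : sin (basisAngle n m) ≤ 1 / √n := by
  rcases n.eq_zero_or_pos with rfl | hn
  · simp [basisAngle]
  calc sin (basisAngle n m) ≤ sin (arcsin (1 / √n)) :=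
        sin_le_sin_of_le_of_le_pi_div_two (by linarith [basisAngle_nonneg n m, pi_pos])
          (arcsin_le_pi_div_two _) (basisAngle_le_arcsin n m)
    _ = 1 / √n := by
      refine sin_arcsin (by linarith [show 0 ≤ 1 / √n by positivity]) ?_
      rw [div_le_one (by positivity), one_le_sqrt]
      exact_mod_cast hn

theorem OrthonormalBasis.exists_sin_basisAngle_le_abs_inner {ι : Type*} [Fintype ι]
    (b : OrthonormalBasis ι ℝ E) (V : Finset E) (hV : ∀ x ∈ V, ‖x‖ = 1) :
    ∃ e : OrthonormalBasis ι ℝ E, ∀ x ∈ V, ∀ j,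
      sin (basisAngle (Fintype.card ι) V.card) ≤ |⟪e j, x⟫| := by
  classical
  rcases V.eq_empty_or_nonempty with rfl | hVne
  · exact ⟨b, by simp⟩
  set n := Fintype.card ι
  induction hVne using Finset.Nonempty.cons_induction with
  | singleton x =>
    obtain ⟨e, he⟩ := b.exists_inner_eq_one_div_sqrt_card (hV x (Finset.mem_singleton_self x))
    refine ⟨e, fun z hz j => ?_⟩
    rw [Finset.mem_singleton.mp hz, he j]
    exact (sin_basisAngle_le n _).trans (le_abs_self _)
  | cons x s hx hs ih =>
    obtain ⟨e₀, he₀⟩ := ih (fun z hz => hV z (Finset.mem_cons_of_mem hz))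
    have hx₁ := hV x (Finset.mem_cons_self x s)
    obtain ⟨j₀, hj₀⟩ := e₀.exists_one_div_sqrt_card_le_abs_inner hx₁
    obtain ⟨e, he, hex⟩ := e₀.exists_sin_mul_le_abs_inner_of_finset hx₁ (Finset.univ.erase j₀)
      (basisAngle_nonneg n s.card) (basisAngle_le_pi_div_two n s.card)
    rw [Finset.card_erase_of_mem (Finset.mem_univ _), Finset.card_univ,
      ← basisAngle_succ n hs.card_pos.ne'] at he hex
    refine ⟨e, fun z hz j => ?_⟩
    rw [Finset.card_cons]
    rcases Finset.mem_cons.mp hz with rfl | hz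
    · by_cases hj : j = j₀
      · subst hj
        exact he z hx₁ j ((sin_basisAngle_le n s.card).trans hj₀)
      · exact hex j (Finset.mem_erase.mpr ⟨hj, Finset.mem_univ j⟩)
    · exact he z (hV z (Finset.mem_cons_of_mem hz)) j (he₀ z hz j)

theorem stmt_4_general (n Q ℓ : ℕ) (hℓ : ℓ ≤ Q * (Q - 1))
    (v : Fin ℓ → EuclideanSpace ℝ (Fin n)) (hv : ∀ b, ‖v b‖ = 1) :
    ∃ e : OrthonormalBasis (Fin n) ℝ (EuclideanSpace ℝ (Fin n)),
      ∀ (α : Fin n) (b : Fin ℓ),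
        Real.sin (Real.arcsin (1 / Real.sqrt n) *
            (1 / 2 : ℝ) ^ ((n - 1) * (Q * (Q - 1) - 1)))
          ≤ |(⟪e α, v b⟫)| := by
  obtain ⟨e, he⟩ := (EuclideanSpace.basisFun (Fin n) ℝ).exists_sin_basisAngle_le_abs_inner
    (Finset.univ.image v) (by simpa using hv)
  rw [Fintype.card_fin] at he
  refine ⟨e, fun α b => le_trans ?_ (he (v b) (Finset.mem_image_of_mem v (Finset.mem_univ b)) α)⟩
  exact sin_basisAngle_anti n (Finset.card_image_le.trans (by simpa using hℓ))

/-- Basis-choice angle lemma: given at most `Q(Q−1)` unit directions in `ℝⁿ` (`n,Q ≥ 2`),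
there is an orthonormal basis `{e_α}` such that every direction makes angle at least
`θ₀ = arcsin(1/√n)·(1/2)^{(n−1)(Q(Q−1)−1)}` with every coordinate hyperplane, i.e.
`|⟨e_α, v_b⟩| ≥ sin θ₀` for all `α, b`. -/
theorem stmt_4 (n Q ℓ : ℕ) (hn : 2 ≤ n) (hQ : 2 ≤ Q) (hℓ : ℓ ≤ Q * (Q - 1))
    (v : Fin ℓ → EuclideanSpace ℝ (Fin n)) (hv : ∀ b, ‖v b‖ = 1) :
    ∃ e : OrthonormalBasis (Fin n) ℝ (EuclideanSpace ℝ (Fin n)),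
      ∀ (α : Fin n) (b : Fin ℓ),
        Real.sin (Real.arcsin (1 / Real.sqrt n) *
            (1 / 2 : ℝ) ^ ((n - 1) * (Q * (Q - 1) - 1)))
          ≤ |(⟪e α, v b⟫)| :=
  stmt_4_general n Q ℓ hℓ v hv
end
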